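/- arXiv:1901.05621 — 2 statements merged into one kernel-verified Lean document; each statement's English description precedes it below -/
import Mathlib

section
/- Let X^(1), ..., X^(n) be i.i.d. uniform on [0,1)^d. The expected number of interior generators (minimal elements of the record-setting region with all coordinates nonzero) equals I_{d,n} = n^{\underline{d}} ∫_{[0,1)^d} (∏_{j=1}^d (1 - x_j))^{d-1} (1 - ∏_{j=1}^d (1 - x_j))^{n-d} dx, where n^{\underline{d}} = n(n-1)⋯(n-d+1) is the falling factorial. -/
open MeasureTheory Set

/-- The record-setting region of the points `X 0, …, X (n-1)` within `[0,1)^d`. -/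
def recordSet {d n : ℕ} (X : Fin n → Fin d → ℝ) : Set (Fin d → ℝ) :=
  {x | (∀ j, x j ∈ Set.Ico (0:ℝ) 1) ∧ ∀ i, ¬ ∀ j, x j < X i j}

/-- The generators: minimal elements of the record-setting region. -/
def generators {d n : ℕ} (X : Fin n → Fin d → ℝ) : Set (Fin d → ℝ) :=
  {g | g ∈ recordSet X ∧ ∀ y ∈ recordSet X, y ≤ g → y = g}

/-- The interior generators: generators with all coordinates nonzero. -/
def interiorGenerators {d n : ℕ} (X : Fin n → Fin d → ℝ) : Set (Fin d → ℝ) :=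
  {g | g ∈ generators X ∧ ∀ j, g j ≠ 0}

/-- The canonical model for `n` i.i.d. observations uniform on `[0,1)^d`:
Lebesgue measure restricted to the cube `[0,1)^{n·d}`. -/
noncomputable def expInteriorGens (d n : ℕ) : ℝ :=
  ∫ X in {X : Fin n → Fin d → ℝ | ∀ i j, X i j ∈ Set.Ico (0:ℝ) 1},
    ((interiorGenerators X).ncard : ℝ)

/-- Expected total number of generators after `n` uniform observations in dimension `d`. -/
noncomputable def expGens (d n : ℕ) : ℝ :=
  ∫ X in {X : Fin n → Fin d → ℝ | ∀ i j, X i j ∈ Set.Ico (0:ℝ) 1},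
    ((generators X).ncard : ℝ)


def Good {d n : ℕ} (X : Fin n → Fin d → ℝ) (σ : Fin d → Fin n) : Prop :=
  (∀ ⦃j j' : Fin d⦄, j ≠ j' → X (σ j') j' < X (σ j) j') ∧ ∀ i, ∃ j, X i j ≤ X (σ j) j

def gmap {d n : ℕ} (X : Fin n → Fin d → ℝ) (σ : Fin d → Fin n) : Fin d → ℝ :=
  fun j => X (σ j) j

variable {d n : ℕ} {X : Fin n → Fin d → ℝ} {σ : Fin d → Fin n}

lemma Good.injective (h : Good X σ) : Function.Injective σ := by
  intro j j' e
  by_contra hne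
  have := h.1 hne
  rw [e] at this
  exact lt_irrefl _ this

lemma mem_interiorGenerators_of_good (hX : ∀ i j, X i j ∈ Set.Ico (0:ℝ) 1)
    (hnz : ∀ i j, X i j ≠ 0) (h : Good X σ) : gmap X σ ∈ interiorGenerators X := by
  have hrec : gmap X σ ∈ recordSet X := by
    refine ⟨fun j => hX _ _, fun i hi => ?_⟩
    obtain ⟨j, hj⟩ := h.2 i
    exact absurd (hi j) (not_lt.2 hj)
  refine ⟨⟨hrec, fun y hy hle => ?_⟩, fun j => hnz _ _⟩
  by_contra hne
  obtain ⟨j, hj⟩ := Function.ne_iff.1 hne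
  have hjlt : y j < gmap X σ j := lt_of_le_of_ne (hle j) hj
  refine hy.2 (σ j) (fun j' => ?_)
  rcases eq_or_ne j' j with rfl | hne'
  · exact hjlt
  · exact lt_of_le_of_lt (hle j') (h.1 (Ne.symm hne'))

lemma exists_good_of_mem {g : Fin d → ℝ} (hg : g ∈ interiorGenerators X) :
    ∃ σ, Good X σ ∧ g = gmap X σ := by
  obtain ⟨⟨⟨hcube, hrec⟩, hmin⟩, hnz⟩ := hg
  have key : ∀ j, ∃ i, X i j = g j ∧ ∀ j', j' ≠ j → g j' < X i j' := by
    intro j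
    have hgj : 0 < g j := lt_of_le_of_ne (hcube j).1 (Ne.symm (hnz j))
    -- choose ε
    set s : Finset ℝ := insert (g j)
      (Finset.univ.image fun i : Fin n => if X i j < g j then g j - X i j else g j) with hs
    have hsne : s.Nonempty := ⟨g j, Finset.mem_insert_self _ _⟩
    set ε0 : ℝ := s.inf' hsne id with hε0
    have hε0pos : 0 < ε0 := by
      rw [hε0, Finset.lt_inf'_iff]
      intro b hb
      rw [hs] at hb
      rcases Finset.mem_insert.1 hb with rfl | hb
      · exact hgj
      · obtain ⟨i, _, rfl⟩ := Finset.mem_image.1 hb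
        split
        · simpa using by linarith [show X i j < g j from by assumption]
        · exact hgj
    have hε0le : ε0 ≤ g j := Finset.inf'_le _ (Finset.mem_insert_self _ _)
    set ε : ℝ := ε0 / 2 with hε
    have hεpos : 0 < ε := by positivity
    have hεlt : ε < g j := by
      have : ε < ε0 := by rw [hε]; linarith
      linarith
    have hbound : ∀ i, X i j < g j → X i j < g j - ε := by
      intro i hi
      have h1 : ε0 ≤ g j - X i j := by
        have hm : (g j - X i j) ∈ s := by
          rw [hs]
          refine Finset.mem_insert_of_mem (Finset.mem_image.2 ⟨i, Finset.mem_univ _, ?_⟩)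
          rw [if_pos hi]
        exact Finset.inf'_le _ hm
      have : ε < ε0 := by rw [hε]; linarith
      linarith
    -- the perturbed point
    set y : Fin d → ℝ := Function.update g j (g j - ε) with hy
    have hyle : y ≤ g := by
      intro j'
      rcases eq_or_ne j' j with rfl | hne'
      · simp [hy]; linarith
      · simp [hy, Function.update_of_ne hne']
    have hyne : y ≠ g := by
      intro e
      have := congrFun e j
      simp [hy] at this
      linarith
    have hynotin : y ∉ recordSet X := fun hmem => hyne (hmin y hmem hyle)
    have hycube : ∀ j', y j' ∈ Set.Ico (0:ℝ) 1 := by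
      intro j'
      rcases eq_or_ne j' j with rfl | hne'
      · simp [hy]
        constructor
        · linarith
        · linarith [(hcube j').2]
      · simp [hy, Function.update_of_ne hne']
        exact hcube j'
    have : ∃ i, ∀ j', y j' < X i j' := by
      by_contra hcon
      push_neg at hcon
      exact hynotin ⟨hycube, fun i hi => by obtain ⟨j', hj'⟩ := hcon i; exact absurd (hi j') (not_lt.2 hj')⟩
    obtain ⟨i, hi⟩ := this
    have hgt : ∀ j', j' ≠ j → g j' < X i j' := by
      intro j' hne'
      have := hi j'
      rwa [hy, Function.update_of_ne hne'] at this
    have hlow : g j ≤ X i j := by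
      by_contra hcon
      push_neg at hcon
      have := hbound i hcon
      have h2 := hi j
      rw [hy, Function.update_self] at h2
      linarith
    have hup : X i j ≤ g j := by
      have := hrec i
      push_neg at this
      obtain ⟨j'', hj''⟩ := this
      rcases eq_or_ne j'' j with rfl | hne''
      · exact hj''
      · exact absurd (hgt j'' hne'') (not_lt.2 hj'')
    exact ⟨i, le_antisymm hup hlow, hgt⟩
  choose σ hσ1 hσ2 using key
  refine ⟨σ, ⟨fun j j' hne => ?_, fun i => ?_⟩, funext fun j => (hσ1 j).symm⟩
  · rw [hσ1 j']
    exact hσ2 j j' (Ne.symm hne)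
  · have := hrec i
    push_neg at this
    obtain ⟨j, hj⟩ := this
    exact ⟨j, by rw [hσ1 j]; exact hj⟩

lemma gmap_injective (hc : ∀ j : Fin d, Function.Injective fun i => X i j) :
    Function.Injective (gmap X) := by
  intro σ σ' h
  funext j
  exact hc j (congrFun h j)

lemma interiorGenerators_eq (hX : ∀ i j, X i j ∈ Set.Ico (0:ℝ) 1)
    (hc : ∀ j : Fin d, Function.Injective fun i => X i j) (hnz : ∀ i j, X i j ≠ 0) :
    interiorGenerators X = gmap X '' {σ | Good X σ} := by
  ext g
  constructor
  · intro hg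
    obtain ⟨σ, h1, h2⟩ := exists_good_of_mem hg
    exact ⟨σ, h1, h2.symm⟩
  · rintro ⟨σ, h1, rfl⟩
    exact mem_interiorGenerators_of_good hX hnz h1

noncomputable def phiL (i : Fin n) (j : Fin d) : (Fin n → Fin d → ℝ) →ₗ[ℝ] ℝ :=
  (LinearMap.proj (R := ℝ) (φ := fun _ : Fin d => ℝ) j).comp (LinearMap.proj i)

@[simp] lemma phiL_apply (i : Fin n) (j : Fin d) (X : Fin n → Fin d → ℝ) :
    phiL i j X = X i j := rfl

lemma volume_badSet_null :
    volume {X : Fin n → Fin d → ℝ |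
      ¬((∀ j, Function.Injective fun i => X i j) ∧ ∀ i j, X i j ≠ 0)} = 0 := by
  have hsub : {X : Fin n → Fin d → ℝ |
      ¬((∀ j, Function.Injective fun i => X i j) ∧ ∀ i j, X i j ≠ 0)} ⊆
      (⋃ (j : Fin d) (i : Fin n) (i' : Fin n) (_ : i ≠ i'), {X | X i j = X i' j}) ∪
      ⋃ (i : Fin n) (j : Fin d), {X | X i j = 0} := by
    intro X hX
    simp only [Set.mem_setOf_eq, not_and_or] at hX
    rcases hX with h | h
    · push_neg at h
      obtain ⟨j, hj⟩ := h
      rw [Function.not_injective_iff] at hj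
      obtain ⟨i, i', h1, h2⟩ := hj
      exact Or.inl (Set.mem_iUnion.2 ⟨j, Set.mem_iUnion.2 ⟨i, Set.mem_iUnion.2 ⟨i',
        Set.mem_iUnion.2 ⟨h2, h1⟩⟩⟩⟩)
    · push_neg at h
      obtain ⟨i, j, hij⟩ := h
      exact Or.inr (Set.mem_iUnion.2 ⟨i, Set.mem_iUnion.2 ⟨j, hij⟩⟩)
  refine measure_mono_null hsub ?_
  refine measure_union_null ?_ ?_
  · refine measure_iUnion_null fun j => measure_iUnion_null fun i => measure_iUnion_null
      fun i' => measure_iUnion_null fun hne => ?_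
    refine measure_mono_null (t := (LinearMap.ker (phiL i j - phiL i' j) : Set _)) ?_ ?_
    · intro X hX
      simp only [SetLike.mem_coe, LinearMap.mem_ker, LinearMap.sub_apply, phiL_apply]
      simpa [sub_eq_zero] using hX
    · refine Measure.addHaar_submodule _ _ ?_
      rw [Ne, LinearMap.ker_eq_top]
      intro h0
      have := congrFun (congrArg DFunLike.coe h0) (fun a _ => if a = i then (1:ℝ) else 0)
      simp [LinearMap.sub_apply, hne.symm] at this
  · refine measure_iUnion_null fun i => measure_iUnion_null fun j => ?_
    refine measure_mono_null (t := (LinearMap.ker (phiL i j) : Set _)) ?_ ?_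
    · intro X hX
      simpa [LinearMap.mem_ker] using hX
    · refine Measure.addHaar_submodule _ _ ?_
      rw [Ne, LinearMap.ker_eq_top]
      intro h0
      have := congrFun (congrArg DFunLike.coe h0) (fun _ _ => (1:ℝ))
      simp at this

section s3
variable {d n : ℕ}
def bigCube (d n : ℕ) : Set (Fin n → Fin d → ℝ) := {X | ∀ i j, X i j ∈ Set.Ico (0:ℝ) 1}

lemma measurable_eval (i : Fin n) (j : Fin d) :
    Measurable fun X : Fin n → Fin d → ℝ => X i j :=
  (measurable_pi_apply j).comp (measurable_pi_apply i)

lemma measurableSet_goodSet (σ : Fin d → Fin n) :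
    MeasurableSet {X : Fin n → Fin d → ℝ | Good X σ} := by
  have h1 : MeasurableSet {X : Fin n → Fin d → ℝ |
      ∀ ⦃j j' : Fin d⦄, j ≠ j' → X (σ j') j' < X (σ j) j'} := by
    rw [show {X : Fin n → Fin d → ℝ | ∀ ⦃j j' : Fin d⦄, j ≠ j' → X (σ j') j' < X (σ j) j'}
        = ⋂ (j : Fin d) (j' : Fin d) (_ : j ≠ j'), {X | X (σ j') j' < X (σ j) j'} by
      ext X; simp [Set.mem_iInter]]
    exact MeasurableSet.iInter fun j => MeasurableSet.iInter fun j' =>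
      MeasurableSet.iInter fun _ => measurableSet_lt (measurable_eval _ _) (measurable_eval _ _)
  have h2 : MeasurableSet {X : Fin n → Fin d → ℝ | ∀ i, ∃ j, X i j ≤ X (σ j) j} := by
    rw [show {X : Fin n → Fin d → ℝ | ∀ i, ∃ j, X i j ≤ X (σ j) j}
        = ⋂ (i : Fin n), ⋃ (j : Fin d), {X | X i j ≤ X (σ j) j} by
      ext X; simp [Set.mem_iInter, Set.mem_iUnion]]
    exact MeasurableSet.iInter fun i => MeasurableSet.iUnion fun j =>
      measurableSet_le (measurable_eval _ _) (measurable_eval _ _)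
  exact h1.inter h2

lemma measurableSet_bigCube : MeasurableSet (bigCube d n) := by
  rw [show bigCube d n = ⋂ (i : Fin n) (j : Fin d), {X | X i j ∈ Set.Ico (0:ℝ) 1} by
    ext X; simp [bigCube, Set.mem_iInter]]
  exact MeasurableSet.iInter fun i => MeasurableSet.iInter fun j =>
    (measurable_eval i j) measurableSet_Ico

lemma volume_bigCube : volume (bigCube d n) = 1 := by
  rw [show bigCube d n = Set.pi Set.univ (fun _ : Fin n =>
      Set.pi Set.univ fun _ : Fin d => Set.Ico (0:ℝ) 1) by
    ext X; simp [bigCube, Set.mem_pi]]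
  rw [volume_pi_pi]
  simp [volume_pi_pi, Real.volume_Ico]

end s3

section s4
variable {d n : ℕ}
lemma exists_perm {σ τ : Fin d → Fin n} (hσ : Function.Injective σ)
    (hτ : Function.Injective τ) : ∃ π : Equiv.Perm (Fin n), ∀ j, π (τ j) = σ j := by
  classical
  have hc1 : Fintype.card (Set.range τ) = Fintype.card (Set.range σ) := by
    rw [Fintype.card_congr (Equiv.ofInjective τ hτ).symm,
      Fintype.card_congr (Equiv.ofInjective σ hσ).symm]
  have hcard : Fintype.card ((Set.range τ)ᶜ : Set (Fin n)) =
      Fintype.card ((Set.range σ)ᶜ : Set (Fin n)) := by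
    rw [Fintype.card_compl_set, Fintype.card_compl_set, hc1]
  let ec := Fintype.equivOfCardEq hcard
  let e1 := Equiv.ofInjective τ hτ
  let e2 := Equiv.ofInjective σ hσ
  refine ⟨(Equiv.Set.sumCompl (Set.range τ)).symm.trans
    ((Equiv.sumCongr (e1.symm.trans e2) ec).trans (Equiv.Set.sumCompl (Set.range σ))), fun j => ?_⟩
  simp only [Equiv.trans_apply]
  rw [show (Equiv.Set.sumCompl (Set.range τ)).symm (τ j)
      = Sum.inl ⟨τ j, Set.mem_range_self j⟩ from Equiv.Set.sumCompl_symm_apply (s := Set.range τ) (x := ⟨τ j, Set.mem_range_self j⟩)]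
  simp only [Equiv.sumCongr_apply, Sum.map_inl, Equiv.trans_apply]
  have : e1.symm ⟨τ j, Set.mem_range_self j⟩ = j := Equiv.ofInjective_symm_apply hτ j
  rw [this]
  simp [e2, Equiv.ofInjective]

lemma measurePreserving_comp_perm (π : Equiv.Perm (Fin n)) :
    MeasurePreserving (fun X : Fin n → Fin d → ℝ => X ∘ π) volume volume := by
  have h := volume_preserving_arrowCongr' (β₁ := Fin d → ℝ) π.symm
    (MeasurableEquiv.refl (Fin d → ℝ)) (MeasurePreserving.id _)
  convert h using 1
  all_goals rfl

end s4

section prodid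
variable {M : Type*} [CommMonoid M]

lemma prod_succAbove_pow (m : ℕ) (g : Fin (m+1) → M) :
    ∏ j : Fin (m+1), ∏ k : Fin m, g (j.succAbove k) = (∏ j, g j) ^ m := by
  have h1 : ∀ j : Fin (m+1), ∏ k : Fin m, g (j.succAbove k)
      = ∏ j' ∈ Finset.univ.erase j, g j' := by
    intro j
    refine Finset.prod_nbij (fun k => j.succAbove k) ?_ ?_ ?_ ?_
    · intro k _
      exact Finset.mem_erase.2 ⟨Fin.succAbove_ne j k, Finset.mem_univ _⟩
    · exact Fin.succAbove_right_injective.injOn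
    · intro j' hj'
      obtain ⟨hne, _⟩ := Finset.mem_erase.1 hj'
      obtain ⟨k, hk⟩ := Fin.exists_succAbove_eq hne
      exact ⟨k, Finset.mem_coe.2 (Finset.mem_univ _), hk⟩
    · intro _ _; rfl
  calc ∏ j : Fin (m+1), ∏ k : Fin m, g (j.succAbove k)
      = ∏ j : Fin (m+1), ∏ j' ∈ Finset.univ.erase j, g j' := Finset.prod_congr rfl fun j _ => h1 j
    _ = ∏ j', ∏ _j ∈ Finset.univ.erase j', g j' := by
        refine Finset.prod_comm' ?_
        intro x y
        simp only [Finset.mem_univ, true_and, Finset.mem_erase, and_true]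
        exact ne_comm
    _ = ∏ j', g j' ^ m := by
        refine Finset.prod_congr rfl fun j' _ => ?_
        rw [Finset.prod_const, Finset.card_erase_of_mem (Finset.mem_univ _)]
        simp
    _ = (∏ j, g j) ^ m := by rw [Finset.prod_pow]

end prodid

section volB
variable {d : ℕ}

lemma volume_B {x : Fin d → ℝ} (hx : ∀ j, x j ∈ Set.Ico (0:ℝ) 1) :
    volume {z : Fin d → ℝ | (∀ j, z j ∈ Set.Ico (0:ℝ) 1) ∧ ∃ j, z j ≤ x j}
      = 1 - ∏ j, ENNReal.ofReal (1 - x j) := by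
  have hBeq : {z : Fin d → ℝ | (∀ j, z j ∈ Set.Ico (0:ℝ) 1) ∧ ∃ j, z j ≤ x j}
      = (Set.pi Set.univ fun _ : Fin d => Set.Ico (0:ℝ) 1) \
        (Set.pi Set.univ fun j : Fin d => Set.Ioo (x j) 1) := by
    ext z
    simp only [Set.mem_setOf_eq, Set.mem_diff, Set.mem_pi, Set.mem_univ, forall_true_left,
      Set.mem_Ico, Set.mem_Ioo, true_implies]
    constructor
    · rintro ⟨h1, j, hj⟩
      exact ⟨h1, fun hall => absurd (hall j).1 (not_lt.2 hj)⟩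
    · rintro ⟨h1, h2⟩
      refine ⟨h1, ?_⟩
      by_contra hcon
      push_neg at hcon
      exact h2 fun j => ⟨hcon j, (h1 j).2⟩
  have hsub : (Set.pi Set.univ fun j : Fin d => Set.Ioo (x j) 1) ⊆
      Set.pi Set.univ fun _ : Fin d => Set.Ico (0:ℝ) 1 := by
    intro z hz j hj
    have := hz j hj
    exact ⟨le_of_lt (lt_of_le_of_lt (hx j).1 this.1), this.2⟩
  have hTmeas : MeasurableSet (Set.pi Set.univ fun j : Fin d => Set.Ioo (x j) 1) :=
    MeasurableSet.univ_pi fun j => measurableSet_Ioo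
  have hTvol : volume (Set.pi Set.univ fun j : Fin d => Set.Ioo (x j) 1)
      = ∏ j, ENNReal.ofReal (1 - x j) := by
    rw [volume_pi_pi]
    simp [Real.volume_Ioo]
  have hTfin : volume (Set.pi Set.univ fun j : Fin d => Set.Ioo (x j) 1) ≠ ⊤ := by
    rw [hTvol]
    exact (lt_of_le_of_lt (Finset.prod_le_one (fun _ _ => zero_le)
      (fun j _ => by simp [ENNReal.ofReal_le_one]; linarith [(hx j).1])) (by norm_num)).ne
  rw [hBeq, measure_diff hsub hTmeas.nullMeasurableSet hTfin, hTvol]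
  congr 1
  rw [volume_pi_pi]
  simp [Real.volume_Ico]
end volB

section diag
variable {m : ℕ}

abbrev SYset (m : ℕ) : Set (Fin (m+1) → Fin (m+1) → ℝ) :=
  {Y | (∀ j j', Y j j' ∈ Set.Ico (0:ℝ) 1) ∧ ∀ ⦃j j'⦄, j ≠ j' → Y j' j' < Y j j'}

abbrev cubeSet (d : ℕ) : Set (Fin d → ℝ) := {x | ∀ j, x j ∈ Set.Ico (0:ℝ) 1}

lemma measurable_eval2 {ι κ : Type*} [MeasurableSpace ι'] (i : ι) (j : κ) :
    True := trivial

lemma measurableSet_SYset : MeasurableSet (SYset m) := by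
  have h1 : MeasurableSet {Y : Fin (m+1) → Fin (m+1) → ℝ | ∀ j j', Y j j' ∈ Set.Ico (0:ℝ) 1} := by
    rw [show {Y : Fin (m+1) → Fin (m+1) → ℝ | ∀ j j', Y j j' ∈ Set.Ico (0:ℝ) 1}
        = ⋂ (j) (j'), {Y : Fin (m+1) → Fin (m+1) → ℝ | Y j j' ∈ Set.Ico (0:ℝ) 1} by
      ext Y; simp [Set.mem_iInter]]
    exact MeasurableSet.iInter fun j => MeasurableSet.iInter fun j' =>
      ((measurable_pi_apply j').comp (measurable_pi_apply j)) measurableSet_Ico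
  have h2 : MeasurableSet {Y : Fin (m+1) → Fin (m+1) → ℝ |
      ∀ ⦃j j'⦄, j ≠ j' → Y j' j' < Y j j'} := by
    rw [show {Y : Fin (m+1) → Fin (m+1) → ℝ | ∀ ⦃j j'⦄, j ≠ j' → Y j' j' < Y j j'}
        = ⋂ (j) (j') (_ : j ≠ j'), {Y : Fin (m+1) → Fin (m+1) → ℝ | Y j' j' < Y j j'} by
      ext Y; simp [Set.mem_iInter]]
    exact MeasurableSet.iInter fun j => MeasurableSet.iInter fun j' =>
      MeasurableSet.iInter fun _ => measurableSet_lt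
        ((measurable_pi_apply j').comp (measurable_pi_apply j'))
        ((measurable_pi_apply j').comp (measurable_pi_apply j))
  exact h1.inter h2

lemma measurableSet_cubeSet {d : ℕ} : MeasurableSet (cubeSet d) := by
  rw [show cubeSet d = ⋂ (j), {x : Fin d → ℝ | x j ∈ Set.Ico (0:ℝ) 1} by
    ext x; simp [Set.mem_iInter]]
  exact MeasurableSet.iInter fun j => (measurable_pi_apply j) measurableSet_Ico

lemma lintegral_SY (f : (Fin (m+1) → ℝ) → ENNReal) (hf : Measurable f) :
    ∫⁻ Y in SYset m, f (fun j => Y j j)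
      = ∫⁻ x in cubeSet (m+1), (∏ j, ENNReal.ofReal (1 - x j)) ^ m * f x := by
  classical
  -- the measure preserving map
  set Θ : (Fin (m+1) → Fin (m+1) → ℝ) →
      (Fin (m+1) → ℝ) × (Fin (m+1) → Fin m → ℝ) :=
    fun Y => (fun j => Y j j, fun j k => Y j (j.succAbove k)) with hΘdef
  have hMP : MeasurePreserving Θ volume volume := by
    have h1 : MeasurePreserving
        (fun (Y : Fin (m+1) → Fin (m+1) → ℝ) (j : Fin (m+1)) =>
          (MeasurableEquiv.piFinSuccAbove (fun _ => ℝ) j) (Y j)) volume volume :=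
      volume_preserving_pi fun j => volume_preserving_piFinSuccAbove (fun _ => ℝ) j
    have h2 : MeasurePreserving
        (MeasurableEquiv.arrowProdEquivProdArrow ℝ (Fin m → ℝ) (Fin (m+1))) volume volume :=
      volume_measurePreserving_arrowProdEquivProdArrow ℝ (Fin m → ℝ) (Fin (m+1))
    exact h2.comp h1
  -- the target set
  set SXW : Set ((Fin (m+1) → ℝ) × (Fin (m+1) → Fin m → ℝ)) :=
    {p | (∀ j, p.1 j ∈ Set.Ico (0:ℝ) 1) ∧
      ∀ j k, p.2 j k ∈ Set.Ioo (p.1 (j.succAbove k)) 1} with hSXWdef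
  have hSXWmeas : MeasurableSet SXW := by
    have h1 : MeasurableSet {p : (Fin (m+1) → ℝ) × (Fin (m+1) → Fin m → ℝ) |
        ∀ j, p.1 j ∈ Set.Ico (0:ℝ) 1} := by
      rw [show {p : (Fin (m+1) → ℝ) × (Fin (m+1) → Fin m → ℝ) | ∀ j, p.1 j ∈ Set.Ico (0:ℝ) 1}
          = ⋂ (j), {p : (Fin (m+1) → ℝ) × (Fin (m+1) → Fin m → ℝ) | p.1 j ∈ Set.Ico (0:ℝ) 1} by
        ext p; simp [Set.mem_iInter]]
      exact MeasurableSet.iInter fun j =>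
        ((measurable_pi_apply j).comp measurable_fst) measurableSet_Ico
    have h2 : MeasurableSet {p : (Fin (m+1) → ℝ) × (Fin (m+1) → Fin m → ℝ) |
        ∀ j k, p.2 j k ∈ Set.Ioo (p.1 (j.succAbove k)) 1} := by
      rw [show {p : (Fin (m+1) → ℝ) × (Fin (m+1) → Fin m → ℝ) |
          ∀ j k, p.2 j k ∈ Set.Ioo (p.1 (j.succAbove k)) 1}
          = ⋂ (j) (k), {p : (Fin (m+1) → ℝ) × (Fin (m+1) → Fin m → ℝ) |
              p.1 (j.succAbove k) < p.2 j k ∧ p.2 j k < 1} by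
        ext p; simp [Set.mem_iInter, Set.mem_Ioo]]
      refine MeasurableSet.iInter fun j => MeasurableSet.iInter fun k => ?_
      have hm1 : Measurable fun p : (Fin (m+1) → ℝ) × (Fin (m+1) → Fin m → ℝ) =>
          p.2 j k := by fun_prop
      have hm2 : Measurable fun p : (Fin (m+1) → ℝ) × (Fin (m+1) → Fin m → ℝ) =>
          p.1 (j.succAbove k) := (measurable_pi_apply _).comp measurable_fst
      exact (measurableSet_lt hm2 hm1).inter (measurableSet_lt hm1 measurable_const)
    exact h1.inter h2
  have hpre : Θ ⁻¹' SXW = SYset m := by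
    ext Y
    simp only [Set.mem_preimage, hSXWdef, Set.mem_setOf_eq, hΘdef, Set.mem_Ioo, Set.mem_Ico]
    constructor
    · rintro ⟨hA, hB⟩
      constructor
      · intro j j'
        rcases eq_or_ne j' j with rfl | hne
        · exact hA j'
        · obtain ⟨k, hk⟩ := Fin.exists_succAbove_eq hne
          have := hB j k
          rw [hk] at this
          exact ⟨le_trans (hA j').1 (le_of_lt this.1), this.2⟩
      · intro j j' hne
        obtain ⟨k, hk⟩ := Fin.exists_succAbove_eq (Ne.symm hne)
        have := hB j k
        rw [hk] at this
        exact this.1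
    · rintro ⟨hA, hB⟩
      refine ⟨fun j => hA j j, fun j k => ?_⟩
      refine ⟨hB (Ne.symm (Fin.succAbove_ne j k)), (hA j (j.succAbove k)).2⟩
  -- rewrite as indicator and transport
  have step1 : ∫⁻ Y in SYset m, f (fun j => Y j j)
      = ∫⁻ p, SXW.indicator (fun q => f q.1) p ∂(volume : Measure
          ((Fin (m+1) → ℝ) × (Fin (m+1) → Fin m → ℝ))) := by
    have hgm : Measurable fun q : (Fin (m+1) → ℝ) × (Fin (m+1) → Fin m → ℝ) => f q.1 :=
      hf.comp measurable_fst
    rw [← lintegral_indicator measurableSet_SYset]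
    rw [← hMP.lintegral_comp (hgm.indicator hSXWmeas)]
    refine lintegral_congr fun Y => ?_
    have : SYset m = Θ ⁻¹' SXW := hpre.symm
    rw [this]
    exact Set.indicator_comp_right (g := fun q => f q.1) Θ (s := SXW) (x := Y)
  -- Fubini
  have step2 : ∫⁻ p, SXW.indicator (fun q => f q.1) p ∂(volume : Measure
      ((Fin (m+1) → ℝ) × (Fin (m+1) → Fin m → ℝ)))
      = ∫⁻ x, ∫⁻ W, SXW.indicator (fun q => f q.1) (x, W) := by
    rw [Measure.volume_eq_prod, lintegral_prod]
    have hgm : Measurable fun q : (Fin (m+1) → ℝ) × (Fin (m+1) → Fin m → ℝ) => f q.1 :=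
      hf.comp measurable_fst
    exact (hgm.indicator hSXWmeas).aemeasurable
  have hinner : ∀ x : Fin (m+1) → ℝ,
      (∫⁻ W, SXW.indicator (fun q => f q.1) (x, W))
      = (cubeSet (m+1)).indicator
          (fun x => (∏ j, ENNReal.ofReal (1 - x j)) ^ m * f x) x := by
    intro x
    by_cases hx : x ∈ cubeSet (m+1)
    · rw [Set.indicator_of_mem hx]
      have heq : ∀ W : Fin (m+1) → Fin m → ℝ,
          SXW.indicator (fun q => f q.1) (x, W)
          = (Set.pi Set.univ fun j : Fin (m+1) =>
              (Set.pi Set.univ fun k : Fin m => Set.Ioo (x (j.succAbove k)) 1)).indicator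
              (fun _ => f x) W := by
        intro W
        by_cases hW : ∀ (j : Fin (m+1)) (k : Fin m), W j k ∈ Set.Ioo (x (j.succAbove k)) 1
        · rw [Set.indicator_of_mem (show (x, W) ∈ SXW from ⟨hx, hW⟩),
            Set.indicator_of_mem (Set.mem_univ_pi.2 fun j => Set.mem_univ_pi.2 fun k => hW j k)]
        · rw [Set.indicator_of_notMem (fun hmem => hW fun j k => hmem.2 j k),
            Set.indicator_of_notMem (fun hmem => hW fun j k =>
              Set.mem_univ_pi.1 (Set.mem_univ_pi.1 hmem j) k)]
      rw [lintegral_congr heq]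
      rw [lintegral_indicator_const (MeasurableSet.univ_pi fun j =>
        MeasurableSet.univ_pi fun _ => measurableSet_Ioo)]
      have hvol : ∀ j : Fin (m+1), volume (Set.pi Set.univ fun k : Fin m =>
          Set.Ioo (x (j.succAbove k)) 1)
          = ∏ k : Fin m, ENNReal.ofReal (1 - x (j.succAbove k)) := by
        intro j
        rw [volume_pi_pi]
        simp [Real.volume_Ioo]
      rw [volume_pi_pi, Finset.prod_congr rfl fun j _ => hvol j,
        prod_succAbove_pow m (fun t => ENNReal.ofReal (1 - x t))]
      ring
    · rw [Set.indicator_of_notMem hx]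
      have hzero : ∀ W : Fin (m+1) → Fin m → ℝ,
          SXW.indicator (fun q => f q.1) (x, W) = 0 := fun W =>
        Set.indicator_of_notMem (fun hmem => hx fun j => hmem.1 j) _
      simp [hzero]
  rw [step1, step2, lintegral_congr hinner, lintegral_indicator measurableSet_cubeSet]

end diag

section main
variable {m n : ℕ}

lemma volume_ABC (hn : m + 1 ≤ n) :
    volume ({X : Fin n → Fin (m+1) → ℝ | Good X fun j => Fin.castLE hn j} ∩ bigCube (m+1) n)
    = ∫⁻ x in cubeSet (m+1),
        (∏ j, ENNReal.ofReal (1 - x j)) ^ m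
          * (1 - ∏ j, ENNReal.ofReal (1 - x j)) ^ (n - (m+1)) := by
  classical
  have hAmeas : MeasurableSet
      ({X : Fin n → Fin (m+1) → ℝ | Good X fun j => Fin.castLE hn j} ∩ bigCube (m+1) n) :=
    (measurableSet_goodSet _).inter measurableSet_bigCube
  have hsum : m + 1 + (n - (m+1)) = n := Nat.add_sub_cancel' hn
  set ee : Fin (m+1) ⊕ Fin (n-(m+1)) ≃ Fin n := finSumFinEquiv.trans (finCongr hsum) with heedef
  have hee : ∀ j : Fin (m+1), ee (Sum.inl j) = Fin.castLE hn j := by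
    intro j
    ext
    simp [heedef]
  -- measure preserving map from the product space
  set ρ := (Fin (m+1) → ℝ)
  set Φ : (Fin (m+1) → ρ) × (Fin (n-(m+1)) → ρ) → (Fin n → ρ) :=
    fun p => (MeasurableEquiv.piCongrLeft (fun _ : Fin n => ρ) ee)
      ((MeasurableEquiv.sumPiEquivProdPi (fun _ => ρ)).symm p) with hΦdef
  have hMP : MeasurePreserving Φ volume volume :=
    (volume_measurePreserving_piCongrLeft (fun _ : Fin n => ρ) ee).comp
      ((volume_measurePreserving_sumPiEquivProdPi (fun _ => ρ)).symm _)
  have hΦapp_l : ∀ p (j : Fin (m+1)), Φ p (Fin.castLE hn j) = p.1 j := by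
    intro p j
    rw [← hee j, hΦdef]
    show (MeasurableEquiv.piCongrLeft (fun _ : Fin n => ρ) ee)
      ((MeasurableEquiv.sumPiEquivProdPi (fun _ => ρ)).symm p) (ee (Sum.inl j)) = p.1 j
    rw [MeasurableEquiv.piCongrLeft, MeasurableEquiv.coe_mk,
      Equiv.piCongrLeft_apply_apply, MeasurableEquiv.coe_sumPiEquivProdPi_symm,
      Equiv.sumPiEquivProdPi_symm_apply]
  have hΦapp_r : ∀ p (k : Fin (n-(m+1))), Φ p (ee (Sum.inr k)) = p.2 k := by
    intro p k
    rw [hΦdef]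
    show (MeasurableEquiv.piCongrLeft (fun _ : Fin n => ρ) ee)
      ((MeasurableEquiv.sumPiEquivProdPi (fun _ => ρ)).symm p) (ee (Sum.inr k)) = p.2 k
    rw [MeasurableEquiv.piCongrLeft, MeasurableEquiv.coe_mk,
      Equiv.piCongrLeft_apply_apply, MeasurableEquiv.coe_sumPiEquivProdPi_symm,
      Equiv.sumPiEquivProdPi_symm_apply]
  -- the preimage
  set S : Set ((Fin (m+1) → ρ) × (Fin (n-(m+1)) → ρ)) :=
    {p | p.1 ∈ SYset m ∧ ∀ k, (∀ j, p.2 k j ∈ Set.Ico (0:ℝ) 1) ∧ ∃ j, p.2 k j ≤ p.1 j j}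
    with hSdef
  have hpre : Φ ⁻¹' ({X : Fin n → Fin (m+1) → ℝ | Good X fun j => Fin.castLE hn j}
      ∩ bigCube (m+1) n) = S := by
    ext p
    simp only [Set.mem_preimage, Set.mem_inter_iff, Set.mem_setOf_eq, hSdef, bigCube, Good]
    constructor
    · rintro ⟨⟨hg1, hg2⟩, hcube⟩
      refine ⟨⟨?_, ?_⟩, ?_⟩
      · intro j j'
        have := hcube (ee (Sum.inl j)) j'
        rwa [hee, hΦapp_l] at this
      · intro j j' hne
        have := hg1 hne
        rwa [hΦapp_l, hΦapp_l] at this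
      · intro k
        constructor
        · intro j
          have := hcube (ee (Sum.inr k)) j
          rwa [hΦapp_r] at this
        · obtain ⟨j, hj⟩ := hg2 (ee (Sum.inr k))
          rw [hΦapp_r, hΦapp_l] at hj
          exact ⟨j, hj⟩
    · rintro ⟨⟨hY, hYlt⟩, hZ⟩
      refine ⟨⟨?_, ?_⟩, ?_⟩
      · intro j j' hne
        rw [hΦapp_l, hΦapp_l]
        exact hYlt hne
      · intro i
        obtain ⟨i', rfl⟩ := ee.surjective i
        rcases i' with j | k
        · refine ⟨j, ?_⟩
          rw [hee, hΦapp_l]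
        · obtain ⟨j, hj⟩ := (hZ k).2
          refine ⟨j, ?_⟩
          rw [hΦapp_r, hΦapp_l]
          exact hj
      · intro i j'
        obtain ⟨i', rfl⟩ := ee.surjective i
        rcases i' with j | k
        · rw [hee, hΦapp_l]
          exact hY j j'
        · rw [hΦapp_r]
          exact (hZ k).1 j'
  have hSmeas : MeasurableSet S := by
    rw [← hpre]
    exact hMP.measurable hAmeas
  rw [← hMP.measure_preimage hAmeas.nullMeasurableSet, hpre]
  rw [Measure.volume_eq_prod, Measure.prod_apply hSmeas]
  have hfib : ∀ Y : Fin (m+1) → ρ, volume (Prod.mk Y ⁻¹' S)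
      = (SYset m).indicator
          (fun Y => (1 - ∏ j, ENNReal.ofReal (1 - Y j j)) ^ (n - (m+1))) Y := by
    intro Y
    by_cases hY : Y ∈ SYset m
    · rw [Set.indicator_of_mem hY]
      have : Prod.mk Y ⁻¹' S = Set.pi Set.univ fun _ : Fin (n-(m+1)) =>
          {z : ρ | (∀ j, z j ∈ Set.Ico (0:ℝ) 1) ∧ ∃ j, z j ≤ Y j j} := by
        ext Z
        simp only [Set.mem_preimage, hSdef, Set.mem_setOf_eq, Set.mem_univ_pi]
        constructor
        · rintro ⟨_, hZ⟩
          exact hZ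
        · intro hZ
          exact ⟨hY, hZ⟩
      rw [this, volume_pi_pi]
      have hdiag : ∀ j, Y j j ∈ Set.Ico (0:ℝ) 1 := fun j => hY.1 j j
      rw [Finset.prod_congr rfl fun k _ => volume_B hdiag]
      simp [Finset.prod_const]
    · rw [Set.indicator_of_notMem hY]
      have : Prod.mk Y ⁻¹' S = ∅ := by
        ext Z
        simp only [Set.mem_preimage, hSdef, Set.mem_setOf_eq, Set.mem_empty_iff_false,
          iff_false]
        exact fun h => hY h.1
      simp [this]
  rw [lintegral_congr hfib, lintegral_indicator measurableSet_SYset]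
  exact lintegral_SY (fun x => (1 - ∏ j, ENNReal.ofReal (1 - x j)) ^ (n - (m+1))) (by
    have : Measurable fun x : Fin (m+1) → ℝ => ∏ j, ENNReal.ofReal (1 - x j) :=
      Finset.measurable_prod _ fun j _ =>
        (measurable_const.sub (measurable_pi_apply j)).ennreal_ofReal
    exact ((measurable_const.sub this).pow_const _))

end main


section assembly
variable {d n : ℕ}

lemma volume_goodSet_perm {σ τ : Fin d → Fin n} (hσ : Function.Injective σ)
    (hτ : Function.Injective τ) :
    volume ({X : Fin n → Fin d → ℝ | Good X σ} ∩ bigCube d n)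
      = volume ({X : Fin n → Fin d → ℝ | Good X τ} ∩ bigCube d n) := by
  obtain ⟨π, hπ⟩ := exists_perm hσ hτ
  have hpre : (fun X : Fin n → Fin d → ℝ => X ∘ π) ⁻¹'
      ({X : Fin n → Fin d → ℝ | Good X τ} ∩ bigCube d n)
      = {X : Fin n → Fin d → ℝ | Good X σ} ∩ bigCube d n := by
    ext X
    simp only [Set.mem_preimage, Set.mem_inter_iff, Set.mem_setOf_eq, bigCube, Good,
      Function.comp_apply]
    constructor
    · rintro ⟨⟨h1, h2⟩, h3⟩
      refine ⟨⟨fun j j' hne => ?_, fun i => ?_⟩, fun i j => ?_⟩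
      · have := h1 hne
        rwa [hπ, hπ] at this
      · obtain ⟨j, hj⟩ := h2 (π.symm i)
        rw [Equiv.apply_symm_apply, hπ] at hj
        exact ⟨j, hj⟩
      · have := h3 (π.symm i) j
        rwa [Equiv.apply_symm_apply] at this
    · rintro ⟨⟨g1, g2⟩, g3⟩
      refine ⟨⟨fun j j' hne => ?_, fun i => ?_⟩, fun i j => ?_⟩
      · rw [hπ, hπ]
        exact g1 hne
      · obtain ⟨j, hj⟩ := g2 (π i)
        exact ⟨j, by rw [hπ j]; exact hj⟩
      · exact g3 (π i) j
  rw [← hpre, (measurePreserving_comp_perm π).measure_preimage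
    (((measurableSet_goodSet τ).inter measurableSet_bigCube).nullMeasurableSet)]

lemma goodSet_empty {σ : Fin d → Fin n} (hσ : ¬ Function.Injective σ) :
    {X : Fin n → Fin d → ℝ | Good X σ} = ∅ := by
  ext X
  simp only [Set.mem_setOf_eq, Set.mem_empty_iff_false, iff_false]
  exact fun h => hσ h.injective

end assembly

theorem expected_interior_generators (d n : ℕ) (hd : 1 ≤ d) (hn : d ≤ n) :
    expInteriorGens d n =
      (n.descFactorial d : ℝ) *
        ∫ x in {x : Fin d → ℝ | ∀ j, x j ∈ Set.Ico (0:ℝ) 1},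
          (∏ j, (1 - x j)) ^ (d - 1) * (1 - ∏ j, (1 - x j)) ^ (n - d) := by
  classical
  obtain ⟨m, rfl⟩ : ∃ m, d = m + 1 := ⟨d - 1, (Nat.succ_pred_eq_of_pos hd).symm⟩
  set τ : Fin (m+1) → Fin n := fun j => Fin.castLE hn j with hτdef
  have hτinj : Function.Injective τ := Fin.castLE_injective hn
  haveI hfin : IsFiniteMeasure (volume.restrict (bigCube (m+1) n)) := by
    constructor
    rw [Measure.restrict_apply_univ, volume_bigCube]
    norm_num
  -- Step A : rewrite the expectation as a finite sum of measures
  have hae : ∀ᵐ X ∂(volume.restrict (bigCube (m+1) n)),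
      ((interiorGenerators X).ncard : ℝ)
        = ∑ σ : Fin (m+1) → Fin n, ({X : Fin n → Fin (m+1) → ℝ | Good X σ}).indicator
            (fun _ => (1:ℝ)) X := by
    have hconf : ∀ᵐ X : Fin n → Fin (m+1) → ℝ ∂volume,
        ((∀ j, Function.Injective fun i => X i j) ∧ ∀ i j, X i j ≠ 0) := by
      rw [MeasureTheory.ae_iff]
      exact volume_badSet_null
    filter_upwards [ae_restrict_of_ae hconf, ae_restrict_mem measurableSet_bigCube]
      with X hX hXc
    have hXcube : ∀ i j, X i j ∈ Set.Ico (0:ℝ) 1 := hXc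
    rw [interiorGenerators_eq hXcube hX.1 hX.2,
      Set.ncard_image_of_injective _ (gmap_injective hX.1)]
    have h1 : {σ : Fin (m+1) → Fin n | Good X σ}
        = ↑(Finset.univ.filter fun σ => Good X σ) := by
      ext σ; simp
    rw [h1, Set.ncard_coe_finset]
    have h2 : ∀ σ : Fin (m+1) → Fin n,
        ({X : Fin n → Fin (m+1) → ℝ | Good X σ}).indicator (fun _ => (1:ℝ)) X
          = if Good X σ then (1:ℝ) else 0 := fun σ => Set.indicator_apply _ _ _
    rw [Finset.sum_congr rfl fun σ _ => h2 σ, Finset.sum_boole]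
  have hstepA : expInteriorGens (m+1) n
      = ∑ σ : Fin (m+1) → Fin n,
          (volume ({X : Fin n → Fin (m+1) → ℝ | Good X σ} ∩ bigCube (m+1) n)).toReal := by
    have hrfl : expInteriorGens (m+1) n
        = ∫ X in bigCube (m+1) n, ((interiorGenerators X).ncard : ℝ) := rfl
    rw [hrfl, integral_congr_ae hae]
    rw [integral_finset_sum _ (fun σ _ => by
      refine (integrable_indicator_iff (measurableSet_goodSet σ)).2 ?_
      exact integrableOn_const (measure_lt_top _ _).ne)]
    refine Finset.sum_congr rfl fun σ _ => ?_
    have hind : ∫ a in bigCube (m+1) n,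
        ({X : Fin n → Fin (m+1) → ℝ | Good X σ}).indicator (fun _ => (1:ℝ)) a
        = ((volume.restrict (bigCube (m+1) n)) {X : Fin n → Fin (m+1) → ℝ | Good X σ}).toReal :=
      integral_indicator_one (measurableSet_goodSet σ)
    rw [hind, Measure.restrict_apply (measurableSet_goodSet σ)]
  -- Step B : symmetry
  have hstepB : ∑ σ : Fin (m+1) → Fin n,
      (volume ({X : Fin n → Fin (m+1) → ℝ | Good X σ} ∩ bigCube (m+1) n)).toReal
      = (n.descFactorial (m+1) : ℝ) *
        (volume ({X : Fin n → Fin (m+1) → ℝ | Good X τ} ∩ bigCube (m+1) n)).toReal := by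
    have h1 : ∀ σ : Fin (m+1) → Fin n,
        (volume ({X : Fin n → Fin (m+1) → ℝ | Good X σ} ∩ bigCube (m+1) n)).toReal
        = if Function.Injective σ then
            (volume ({X : Fin n → Fin (m+1) → ℝ | Good X τ} ∩ bigCube (m+1) n)).toReal
          else 0 := by
      intro σ
      by_cases hσ : Function.Injective σ
      · rw [if_pos hσ, volume_goodSet_perm hσ hτinj]
      · rw [if_neg hσ, goodSet_empty hσ, Set.empty_inter]
        simp
    rw [Finset.sum_congr rfl fun σ _ => h1 σ, ← Finset.sum_filter, Finset.sum_const,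
      nsmul_eq_mul]
    congr 1
    rw [← Fintype.card_subtype]
    rw [Fintype.card_congr (Equiv.subtypeInjectiveEquivEmbedding (Fin (m+1)) (Fin n))]
    rw [Fintype.card_embedding_eq]
    simp
  -- Step C : the measure as an integral
  have hnonneg : ∀ x : Fin (m+1) → ℝ, x ∈ cubeSet (m+1) →
      0 ≤ (∏ j, (1 - x j)) ^ m * (1 - ∏ j, (1 - x j)) ^ (n - (m+1)) := by
    intro x hx
    have h1 : 0 ≤ ∏ j, (1 - x j) :=
      Finset.prod_nonneg fun j _ => by linarith [(hx j).2]
    have h2 : ∏ j, (1 - x j) ≤ 1 :=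
      Finset.prod_le_one (fun j _ => by linarith [(hx j).2]) (fun j _ => by linarith [(hx j).1])
    exact mul_nonneg (pow_nonneg h1 m) (pow_nonneg (by linarith) _)
  have hmeasR : Measurable fun x : Fin (m+1) → ℝ =>
      (∏ j, (1 - x j)) ^ m * (1 - ∏ j, (1 - x j)) ^ (n - (m+1)) := by
    have h1 : Measurable fun x : Fin (m+1) → ℝ => ∏ j, (1 - x j) :=
      Finset.measurable_prod _ fun j _ => measurable_const.sub (measurable_pi_apply j)
    exact (h1.pow_const m).mul ((measurable_const.sub h1).pow_const _)
  have hstepC : ∫ x in cubeSet (m+1),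
      (∏ j, (1 - x j)) ^ m * (1 - ∏ j, (1 - x j)) ^ (n - (m+1))
      = (volume ({X : Fin n → Fin (m+1) → ℝ | Good X τ} ∩ bigCube (m+1) n)).toReal := by
    rw [volume_ABC hn]
    rw [MeasureTheory.integral_eq_lintegral_of_nonneg_ae
      ((ae_restrict_iff' measurableSet_cubeSet).2 (Filter.Eventually.of_forall hnonneg))
      hmeasR.aestronglyMeasurable]
    congr 1
    refine lintegral_congr_ae ((ae_restrict_iff' measurableSet_cubeSet).2
      (Filter.Eventually.of_forall fun x hx => ?_))
    have h1 : ∀ j, 0 ≤ 1 - x j := fun j => by linarith [(hx j).2]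
    have h2 : 0 ≤ ∏ j, (1 - x j) := Finset.prod_nonneg fun j _ => h1 j
    have h3 : ∏ j, (1 - x j) ≤ 1 :=
      Finset.prod_le_one (fun j _ => h1 j) (fun j _ => by linarith [(hx j).1])
    dsimp only
    rw [ENNReal.ofReal_mul (pow_nonneg h2 m), ENNReal.ofReal_pow h2,
      ENNReal.ofReal_pow (by linarith),
      ENNReal.ofReal_sub _ h2, ENNReal.ofReal_one,
      ← ENNReal.ofReal_prod_of_nonneg (fun j _ => h1 j)]
  -- Put everything together
  rw [hstepA, hstepB]
  have hd1 : m + 1 - 1 = m := rfl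
  rw [hd1]
  rw [show {x : Fin (m+1) → ℝ | ∀ j, x j ∈ Set.Ico (0:ℝ) 1} = cubeSet (m+1) from rfl]
  rw [hstepC]
end

section
/- The expected number G_{d,n} of generators of the record-setting region after n i.i.d. uniform observations in dimension d satisfies G_{d,n} = Σ_{k=0}^d C(d,k) I_{k,n}, where I_{k,n} is the expected number of interior generators in dimension k after n observations (with I_{0,n} = 1 if n = 0 and 0 otherwise). -/
open MeasureTheory Set

/-! A generator vanishes exactly off its support `T`, and as long as no observation has a zero
coordinate (an event of probability one), restricting it to the coordinates in `T` is a bijection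
onto the interior generators of the observations projected to `T`, with inverse the extension by
zero. The projected observations are again i.i.d. uniform, now in dimension `|T|`, so grouping
generators by support and taking expectations, each of the `C(d, k)` supports of size `k`
contributes `I_{k,n}`.

Linearity of the integral needs the counts to be measurable: the number of interior generators is
a finite sum over the candidate points `j ↦ X (σ j) j`, each weighted by the inverse size of its
fibre. -/

open Function
open scoped Finset

theorem exists_le_lt_forall_lt_imp_le {ι α : Type*} [Finite ι]
    [ConditionallyCompleteLinearOrder α] {a b : α} (hab : a < b) (x : ι → α) :
    ∃ t, a ≤ t ∧ t < b ∧ ∀ i, x i < b → x i ≤ t := by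
  set s := insert a (range x ∩ Iio b)
  have hs : s.Finite := ((finite_range x).inter_of_left _).insert a
  have hbdd : BddAbove s := hs.bddAbove
  refine ⟨sSup s, le_csSup hbdd (mem_insert a _), ?_, fun i hi => le_csSup hbdd ?_⟩
  · rcases (insert_nonempty a _).csSup_mem hs with h | h
    · exact h ▸ hab
    · exact h.2
  · exact mem_insert_of_mem a ⟨mem_range_self i, hi⟩

theorem Set.ncard_eq_sum_inv_card_fiber {ι α K : Type*} [Fintype ι] [DecidableEq α]
    [DivisionSemiring K] [CharZero K] (f : ι → α) {s : Set α} [DecidablePred (· ∈ s)]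
    (hs : s ⊆ range f) :
    (s.ncard : K) = ∑ i, if f i ∈ s then (#{i' | f i' = f i} : K)⁻¹ else 0 := by
  rw [Finset.sum_comp fun a => if a ∈ s then (#{i' | f i' = a} : K)⁻¹ else 0]
  have hterm : ∀ a ∈ Finset.univ.image f,
      #{i' | f i' = a} • (if a ∈ s then (#{i' | f i' = a} : K)⁻¹ else 0) =
        if a ∈ s then 1 else 0 := by
    intro a ha
    obtain ⟨i, -, rfl⟩ := Finset.mem_image.1 ha
    have hne : (#{i' | f i' = f i} : K) ≠ 0 :=
      Nat.cast_ne_zero.2 (Finset.card_ne_zero_of_mem (a := i) (by simp))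
    split_ifs <;> simp [nsmul_eq_mul, hne]
  rw [Finset.sum_congr rfl hterm, Finset.sum_boole]
  congr 1
  rw [← Set.ncard_coe_finset]
  congr 1
  ext a
  simpa using fun ha => hs ha

theorem Set.Finite.ncard_eq_sum_ncard_fiber {α β : Type*} [Fintype β] {s : Set α}
    (hs : s.Finite) (f : α → β) : s.ncard = ∑ b, {a ∈ s | f a = b}.ncard := by
  classical
  rw [ncard_eq_toFinset_card s hs,
    Finset.card_eq_sum_card_fiberwise fun a _ => Finset.mem_univ (f a)]
  refine Finset.sum_congr rfl fun b _ => ?_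
  rw [← ncard_coe_finset]
  congr 1
  ext a
  simp

theorem MeasureTheory.Measure.pi_map_comp_injective {ι κ α : Type*} [Fintype ι] [Fintype κ]
    [MeasurableSpace α] (μ : ι → Measure α) [∀ i, IsProbabilityMeasure (μ i)]
    {e : κ → ι} (he : Injective e) :
    (Measure.pi μ).map (fun x => x ∘ e) = Measure.pi fun k => μ (e k) := by
  refine (Measure.pi_eq fun s hs => ?_).symm
  rw [Measure.map_apply (by fun_prop) (MeasurableSet.univ_pi hs)]
  have hpre : (fun x : ι → α => x ∘ e) ⁻¹' univ.pi s =
      univ.pi (Function.extend e s fun _ => univ) := by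
    ext x
    simp only [mem_preimage, mem_univ_pi, comp_apply]
    refine ⟨fun h i => ?_, fun h k => by simpa [he.extend_apply] using h (e k)⟩
    by_cases hi : i ∈ range e
    · obtain ⟨k, rfl⟩ := hi
      simpa [he.extend_apply] using h k
    · simp [extend_apply' _ _ _ hi]
  rw [hpre, Measure.pi_pi]
  exact (Fintype.prod_of_injective e he _ _ (fun i hi => by simp [extend_apply' _ _ _ hi])
    fun k => by simp [he.extend_apply]).symm

instance : IsProbabilityMeasure (volume.restrict (Ico (0 : ℝ) 1)) := ⟨by simp⟩

section Generators

variable {d n m : ℕ} {X : Fin n → Fin d → ℝ} {g : Fin d → ℝ}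

theorem mem_generators_iff : g ∈ generators X ↔ g ∈ recordSet X ∧
    ∀ j, g j ≠ 0 → ∃ i, g j = X i j ∧ ∀ j' ≠ j, g j' < X i j' := by
  constructor
  · rintro ⟨hg, hmin⟩
    refine ⟨hg, fun j hj => ?_⟩
    -- Lower `g j` to the largest of `0` and the `X i j` below it. This leaves the region, and an
    -- observation dominating the lowered point can only have `X i j = g j`.
    obtain ⟨t, ht0, htg, hxt⟩ := exists_le_lt_forall_lt_imp_le
      ((hg.1 j).1.lt_of_ne' hj) (fun i => X i j)
    have hlower : update g j t ≤ g := update_le_iff.2 ⟨htg.le, fun _ _ => le_rfl⟩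
    have hne : update g j t ≠ g := fun h => htg.ne (by simpa using congrFun h j)
    have hnot : update g j t ∉ recordSet X := fun h => hne (hmin _ h hlower)
    obtain ⟨i, hi⟩ : ∃ i, ∀ j', update g j t j' < X i j' := by
      by_contra! h
      refine hnot ⟨fun j' => ?_, fun i hi => ?_⟩
      · rcases eq_or_ne j' j with rfl | h'
        · simpa using ⟨ht0, htg.trans (hg.1 j').2⟩
        · simpa [h'] using hg.1 j'
      · obtain ⟨j', hj'⟩ := h i
        exact (hi j').not_ge hj'
    have hoff : ∀ j' ≠ j, g j' < X i j' := fun j' h' => by simpa [h'] using hi j'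
    have hge : g j ≤ X i j := not_lt.1 fun h => (hi j).not_ge (by simpa using hxt i h)
    have hle : X i j ≤ g j := not_lt.1 fun h =>
      hg.2 i fun j' => if h' : j' = j then h' ▸ h else hoff j' h'
    exact ⟨i, le_antisymm hge hle, hoff⟩
  · rintro ⟨hg, hsupp⟩
    refine ⟨hg, fun y hy hyg => ?_⟩
    by_contra hne
    obtain ⟨j, hj⟩ := Function.ne_iff.1 hne
    have hlt : y j < g j := (hyg j).lt_of_ne hj
    obtain ⟨i, hgi, hoff⟩ := hsupp j ((hy.1 j).1.trans_lt hlt).ne'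
    exact hy.2 i fun j' =>
      if h' : j' = j then h' ▸ hgi ▸ hlt else (hyg j').trans_lt (hoff j' h')

theorem mem_insert_zero_range_of_mem_generators (hg : g ∈ generators X) (j : Fin d) :
    g j ∈ insert 0 (range fun i => X i j) := by
  by_cases hj : g j = 0
  · exact Or.inl hj
  · obtain ⟨i, hi, -⟩ := (mem_generators_iff.1 hg).2 j hj
    exact Or.inr ⟨i, hi.symm⟩

theorem generators_finite (X : Fin n → Fin d → ℝ) : (generators X).Finite :=
  (Finite.pi fun _ => (finite_range _).insert 0).subset fun _ hg j _ =>
    mem_insert_zero_range_of_mem_generators hg j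

theorem interiorGenerators_subset_range (X : Fin n → Fin d → ℝ) :
    interiorGenerators X ⊆ range fun (σ : Fin d → Fin n) j => X (σ j) j := by
  rintro g ⟨hg, hg0⟩
  choose σ hσ using fun j =>
    (mem_insert_zero_range_of_mem_generators hg j).resolve_left (hg0 j)
  exact ⟨σ, funext hσ⟩

section Projection

variable {e : Fin m → Fin d}

theorem comp_mem_recordSet_iff (hX : ∀ i j, 0 < X i j) (hg : ∀ j ∉ range e, g j = 0) :
    g ∘ e ∈ recordSet (fun i => X i ∘ e) ↔ g ∈ recordSet X := by
  have hforall :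
      ∀ P : Fin d → Prop, (∀ j ∉ range e, P j) → ((∀ k, P (e k)) ↔ ∀ j, P j) :=
    fun P hP => ⟨fun h j => if hj : j ∈ range e then hj.choose_spec ▸ h _ else hP j hj,
      fun h k => h (e k)⟩
  have hcube := hforall (fun j => g j ∈ Ico (0 : ℝ) 1) fun j hj => by simp [hg j hj]
  have hbelow : ∀ i, (∀ k, g (e k) < X i (e k)) ↔ ∀ j, g j < X i j :=
    fun i => hforall (fun j => g j < X i j) fun j hj => hg j hj ▸ hX i j
  simp only [recordSet, mem_ofPred_eq, comp_apply, hcube, hbelow]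

theorem comp_mem_generators_iff (he : Injective e) (hX : ∀ i j, 0 < X i j)
    (hg : ∀ j ∉ range e, g j = 0) :
    g ∘ e ∈ generators (fun i => X i ∘ e) ↔ g ∈ generators X := by
  simp only [mem_generators_iff, comp_mem_recordSet_iff hX hg, comp_apply]
  refine and_congr_right fun _ => ⟨fun h j hj => ?_, fun h k hk => ?_⟩
  · by_cases hje : j ∈ range e
    · obtain ⟨k, rfl⟩ := hje
      obtain ⟨i, hi, hoff⟩ := h k hj
      refine ⟨i, hi, fun j' hj' => ?_⟩
      by_cases hj'e : j' ∈ range e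
      · obtain ⟨k', rfl⟩ := hj'e
        exact hoff k' fun h => hj' (congrArg e h)
      · exact hg j' hj'e ▸ hX i j'
    · exact absurd (hg j hje) hj
  · obtain ⟨i, hi, hoff⟩ := h (e k) hk
    exact ⟨i, hi, fun k' hk' => hoff (e k') (he.ne hk')⟩

theorem generators_support_eq_image (he : Injective e) (hX : ∀ i j, 0 < X i j) :
    {g ∈ generators X | support g = range e} =
      (fun y => Function.extend e y 0) '' interiorGenerators (fun i => X i ∘ e) := by
  ext g
  constructor
  · rintro ⟨hg, hsupp⟩
    have hg0 : ∀ j ∉ range e, g j = 0 := fun j hj => notMem_support.1 (hsupp ▸ hj)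
    refine ⟨g ∘ e, ⟨(comp_mem_generators_iff he hX hg0).2 hg, fun k => ?_⟩,
      funext fun j => ?_⟩
    · exact mem_support.1 (hsupp.symm ▸ mem_range_self k : e k ∈ support g)
    · by_cases hj : j ∈ range e
      · obtain ⟨k, rfl⟩ := hj
        exact he.extend_apply _ _ k
      · simp only [extend_apply' _ _ _ hj, hg0 j hj, Pi.zero_apply]
  · rintro ⟨y, ⟨hy, hy0⟩, rfl⟩
    have hzero : ∀ j ∉ range e, Function.extend e y 0 j = 0 :=
      fun j hj => extend_apply' _ _ _ hj
    refine ⟨(comp_mem_generators_iff he hX hzero).1 (by rwa [extend_comp he]), ?_⟩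
    ext j
    by_cases hj : j ∈ range e
    · obtain ⟨k, rfl⟩ := hj
      simpa [he.extend_apply] using hy0 k
    · simpa [hj] using hzero j hj

end Projection

theorem ncard_generators_eq_sum (hX : ∀ i j, 0 < X i j) :
    (generators X).ncard = ∑ T : Finset (Fin d),
      (interiorGenerators fun i => X i ∘ T.orderEmbOfFin rfl).ncard := by
  classical
  rw [(generators_finite X).ncard_eq_sum_ncard_fiber fun g => Finset.univ.filter (g · ≠ 0)]
  refine Finset.sum_congr rfl fun T _ => ?_
  have hfiber : {g ∈ generators X | Finset.univ.filter (g · ≠ 0) = T} =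
      {g ∈ generators X | support g = range (T.orderEmbOfFin rfl)} := by
    simp only [Finset.range_orderEmbOfFin, Set.ext_iff, Finset.ext_iff]
    simp
  rw [hfiber, generators_support_eq_image (T.orderEmbOfFin rfl).injective hX,
    ncard_image_of_injective _ (extend_injective (T.orderEmbOfFin rfl).injective 0)]

theorem ncard_interiorGenerators_le (X : Fin n → Fin d → ℝ) :
    (interiorGenerators X).ncard ≤ n ^ d :=
  calc (interiorGenerators X).ncard
      ≤ (range fun (σ : Fin d → Fin n) j => X (σ j) j).ncard :=
        ncard_le_ncard (interiorGenerators_subset_range X) (finite_range _)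
    _ ≤ Nat.card (Fin d → Fin n) := by
        rw [← image_univ, ← ncard_univ]
        exact ncard_image_le
    _ = n ^ d := by simp

theorem measurable_ncard_interiorGenerators :
    Measurable fun X : Fin n → Fin d → ℝ => ((interiorGenerators X).ncard : ℝ) := by
  classical
  simp_rw [fun X => ncard_eq_sum_inv_card_fiber (K := ℝ) _ (interiorGenerators_subset_range X),
    Finset.card_filter, Nat.cast_sum, Nat.cast_ite, Nat.cast_one, Nat.cast_zero]
  refine Finset.measurable_sum _ fun σ _ => Measurable.ite ?_ ?_ measurable_const
  · simp only [interiorGenerators, mem_generators_iff, recordSet]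
    measurability
  · refine (Finset.measurable_sum _ fun σ' _ => Measurable.ite ?_ measurable_const
      measurable_const).inv
    simp only [funext_iff]
    measurability

end Generators

section UniformSample

variable {d n m : ℕ}

noncomputable def uniformSample (d n : ℕ) : Measure (Fin n → Fin d → ℝ) :=
  Measure.pi fun _ => Measure.pi fun _ => volume.restrict (Ico 0 1)

instance : IsProbabilityMeasure (uniformSample d n) := by
  unfold uniformSample
  infer_instance

theorem volume_restrict_cube :
    volume.restrict {X : Fin n → Fin d → ℝ | ∀ i j, X i j ∈ Ico (0 : ℝ) 1} =
      uniformSample d n := by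
  have hcube : {X : Fin n → Fin d → ℝ | ∀ i j, X i j ∈ Ico (0 : ℝ) 1} =
      univ.pi fun _ => univ.pi fun _ => Ico 0 1 := by
    ext
    simp
  simp only [hcube, volume_pi, Measure.restrict_pi_pi, uniformSample]

theorem ae_pos_uniformSample : ∀ᵐ X ∂uniformSample d n, ∀ i j, 0 < X i j := by
  have hpos : ∀ᵐ x ∂volume.restrict (Ico (0 : ℝ) 1), 0 < x := by
    rw [Measure.restrict_congr_set Ioo_ae_eq_Ico.symm]
    exact (ae_restrict_mem measurableSet_Ioo).mono fun x hx => hx.1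
  have hrow :
      ∀ j, ∀ᵐ x ∂Measure.pi fun _ : Fin d => volume.restrict (Ico (0 : ℝ) 1), 0 < x j :=
    fun _ => Measure.tendsto_eval_ae_ae.eventually hpos
  exact ae_all_iff.2 fun i => ae_all_iff.2 fun j =>
    Measure.tendsto_eval_ae_ae.eventually (p := fun x : Fin d → ℝ => 0 < x j) (hrow j)

theorem integrable_ncard_interiorGenerators :
    Integrable (fun X => ((interiorGenerators X).ncard : ℝ)) (uniformSample d n) :=
  Integrable.of_bound measurable_ncard_interiorGenerators.aestronglyMeasurable (n ^ d)
    (ae_of_all _ fun X => by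
      simpa using (Nat.cast_le (α := ℝ)).2 (ncard_interiorGenerators_le X))

variable {e : Fin m → Fin d} (he : Injective e)

theorem measurable_comp_coords : Measurable fun (X : Fin n → Fin d → ℝ) i => X i ∘ e := by
  fun_prop

include he in
theorem map_comp_uniformSample :
    (uniformSample d n).map (fun X i => X i ∘ e) = uniformSample m n := by
  have hrow := Measure.pi_map_comp_injective (fun _ : Fin d => volume.restrict (Ico (0 : ℝ) 1)) he
  have : ∀ i : Fin n, SigmaFinite
      ((Measure.pi fun _ : Fin d => volume.restrict (Ico (0 : ℝ) 1)).map (· ∘ e)) :=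
    fun _ => hrow ▸ inferInstance
  have hcomp : Measurable fun x : Fin d → ℝ => x ∘ e := by fun_prop
  rw [uniformSample, Measure.pi_map_pi (f := fun _ => (· ∘ e)) fun _ => hcomp.aemeasurable, hrow,
    uniformSample]

include he in
theorem integral_ncard_interiorGenerators_comp :
    ∫ X, ((interiorGenerators fun i => X i ∘ e).ncard : ℝ) ∂uniformSample d n =
      expInteriorGens m n := by
  rw [expInteriorGens, volume_restrict_cube, ← map_comp_uniformSample he,
    integral_map measurable_comp_coords.aemeasurable
      measurable_ncard_interiorGenerators.aestronglyMeasurable]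

include he in
theorem integrable_ncard_interiorGenerators_comp :
    Integrable (fun X => ((interiorGenerators fun i => X i ∘ e).ncard : ℝ))
      (uniformSample d n) :=
  (map_comp_uniformSample (n := n) he ▸ integrable_ncard_interiorGenerators).comp_measurable
    measurable_comp_coords

end UniformSample

theorem expected_generators_sum (d n : ℕ) :
    expGens d n = ∑ k ∈ Finset.range (d + 1), (d.choose k : ℝ) * expInteriorGens k n :=
  calc expGens d n
      = ∫ X, ∑ T : Finset (Fin d),
          ((interiorGenerators fun i => X i ∘ T.orderEmbOfFin rfl).ncard : ℝ)
        ∂uniformSample d n := by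
        rw [expGens, volume_restrict_cube]
        refine integral_congr_ae (ae_pos_uniformSample.mono fun X hX => ?_)
        simp [ncard_generators_eq_sum hX]
    _ = ∑ T : Finset (Fin d), expInteriorGens T.card n := by
        rw [integral_finsetSum _ fun T _ =>
          integrable_ncard_interiorGenerators_comp (T.orderEmbOfFin rfl).injective]
        exact Finset.sum_congr rfl fun T _ =>
          integral_ncard_interiorGenerators_comp (T.orderEmbOfFin rfl).injective
    _ = ∑ k ∈ Finset.range (d + 1), (d.choose k : ℝ) * expInteriorGens k n := by
        rw [← Finset.powerset_univ, Finset.sum_powerset_apply_card (fun k => expInteriorGens k n)]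
        simp [nsmul_eq_mul]
end
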